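/- arXiv:2004.13586 — 6 statements merged into one kernel-verified Lean document; each statement's English description precedes it below -/
import Mathlib

section
/- For every Fock occupation vector n : Fin M → ℕ and every k ∈ ℕ, the clock label satisfies μ(X^k · n) ≡ μ(n) + k·|n| (mod M). -/
open Finset

/-- Cyclic mode shift: `(X·n)(m) = n(m-1)` with indices mod `M`. -/
def modeShift {M : ℕ} [NeZero M] (n : Fin M → ℕ) : Fin M → ℕ := fun m => n (m - 1)

/-- Total photon number `|n|`. -/
def totalPhotons {M : ℕ} (n : Fin M → ℕ) : ℕ := ∑ m : Fin M, n m

/-- Clock label `μ(n) = Σ m·n(m)`. -/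
def clockLabel {M : ℕ} (n : Fin M → ℕ) : ℕ := ∑ m : Fin M, (m : ℕ) * n m

lemma totalPhotons_modeShift {M : ℕ} [NeZero M] (n : Fin M → ℕ) :
    totalPhotons (modeShift n) = totalPhotons n := by
  unfold totalPhotons modeShift
  exact Fintype.sum_equiv (Equiv.subRight (1 : Fin M)) _ _ (fun j => rfl)

lemma totalPhotons_modeShift_iterate {M : ℕ} [NeZero M] (n : Fin M → ℕ) (k : ℕ) :
    totalPhotons (modeShift^[k] n) = totalPhotons n := by
  induction k with
  | zero => rfl
  | succ k ih => rw [Function.iterate_succ_apply', totalPhotons_modeShift, ih]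

lemma clockLabel_modeShift {M : ℕ} [NeZero M] (n : Fin M → ℕ) :
    clockLabel (modeShift n) ≡ clockLabel n + totalPhotons n [MOD M] := by
  unfold clockLabel totalPhotons modeShift
  have h1 : ∑ m : Fin M, (m : ℕ) * n (m - 1)
      = ∑ j : Fin M, ((j + 1 : Fin M) : ℕ) * n j := by
    refine (Fintype.sum_equiv (Equiv.addRight (1 : Fin M))
      (fun j => ((j + 1 : Fin M) : ℕ) * n j) (fun m => (m : ℕ) * n (m - 1)) (fun j => ?_)).symm
    simp [Equiv.addRight]
  rw [h1]
  have h2 : ∑ j : Fin M, ((j + 1 : Fin M) : ℕ) * n j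
      ≡ ∑ j : Fin M, ((j : ℕ) + 1) * n j [MOD M] := by
    unfold Nat.ModEq
    rw [Finset.sum_nat_mod]
    conv_rhs => rw [Finset.sum_nat_mod]
    congr 1
    refine Finset.sum_congr rfl (fun j _ => ?_)
    rw [Nat.mul_mod, Nat.mul_mod ((j : ℕ) + 1)]
    congr 2
    simp [Fin.add_def, Fin.val_one', Nat.add_mod]
  calc _ ≡ ∑ j : Fin M, ((j : ℕ) + 1) * n j [MOD M] := h2
    _ = (∑ j : Fin M, (j : ℕ) * n j) + ∑ j : Fin M, n j := by
        rw [← Finset.sum_add_distrib]; congr 1; ext j; ring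

/-- `μ(X^k·n) ≡ μ(n) + k·|n| (mod M)`. -/
theorem clockLabel_modeShift_iterate (M : ℕ) [NeZero M] (n : Fin M → ℕ) (k : ℕ) :
    clockLabel (modeShift^[k] n) ≡ clockLabel n + k * totalPhotons n [MOD M] := by
  induction k with
  | zero => simp [Nat.ModEq.refl]
  | succ k ih =>
    rw [Function.iterate_succ_apply']
    have h := clockLabel_modeShift (modeShift^[k] n)
    have ht := totalPhotons_modeShift_iterate n k
    rw [ht] at h
    calc clockLabel (modeShift (modeShift^[k] n))
        ≡ clockLabel (modeShift^[k] n) + totalPhotons n [MOD M] := h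
      _ ≡ clockLabel n + k * totalPhotons n + totalPhotons n [MOD M] := ih.add_right _
      _ = clockLabel n + (k + 1) * totalPhotons n := by ring
end

section
/- If M is prime and the total photon number N of a Fock occupation vector n : Fin M → ℕ is not divisible by M, then the orbit of n under the cyclic mode shift has cardinality exactly M. -/
open Finset

/-- The Pauli class (orbit) of `n` under the cyclic mode shift. -/
def pauliClass {M : ℕ} [NeZero M] (n : Fin M → ℕ) : Finset (Fin M → ℕ) :=
  (Finset.range M).image (fun k => modeShift^[k] n)

/-! A nonzero shift `d` of a cyclic group of prime order generates it, so a function invariant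
under translation by `d` is constant. Two equal shifts `X^j n = X^k n` with `j < k < M` make `n`
invariant under translation by `k - j ≢ 0 (mod M)`; hence `n` is constant and
`N = M · n 0`. -/

open Fin.NatCast Fin.CommRing

theorem Function.Periodic.apply_eq_apply_zero_of_prime_card {G α : Type*} [AddGroup G]
    (hG : (Nat.card G).Prime) {f : G → α} {c : G} (hf : Function.Periodic f c) (hc : c ≠ 0)
    (x : G) : f x = f 0 := by
  have : Fact (Nat.card G).Prime := ⟨hG⟩
  obtain ⟨k, rfl⟩ := mem_multiples_of_prime_card rfl hc (g' := x)
  exact hf.nsmul_eq k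

theorem modeShift_iterate_apply {M : ℕ} [NeZero M] (n : Fin M → ℕ) (k : ℕ) (m : Fin M) :
    modeShift^[k] n m = n (m - k) := by
  induction k generalizing m with
  | zero => simp
  | succ k ih =>
    rw [Function.iterate_succ_apply', modeShift, ih, sub_sub, Nat.cast_succ, add_comm]

theorem periodic_of_modeShift_iterate_eq {M : ℕ} [NeZero M] {n : Fin M → ℕ} {j k : ℕ}
    (hjk : j ≤ k) (h : modeShift^[j] n = modeShift^[k] n) :
    Function.Periodic n ((k - j : ℕ) : Fin M) := by
  intro x
  have := congrFun h (x + k)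
  rwa [modeShift_iterate_apply, modeShift_iterate_apply, add_sub_cancel_right, add_sub_assoc,
    ← Nat.cast_sub hjk] at this

theorem totalPhotons_const {M : ℕ} (c : ℕ) : totalPhotons (fun _ : Fin M => c) = M * c := by
  simp [totalPhotons]

/-- if `M` is prime and the total photon number of `n` is not divisible by
`M`, then the shift orbit of `n` has cardinality exactly `M`. -/
theorem pauliClass_card_of_prime (M : ℕ) [NeZero M] (hp : M.Prime) (n : Fin M → ℕ)
    (hN : ¬ M ∣ totalPhotons n) :
    (pauliClass n).card = M := by
  rw [pauliClass, card_image_of_injOn, card_range]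
  intro j hj k hk hjk
  simp only [coe_range, Set.mem_Iio] at hj hk
  by_contra hne
  wlog hlt : j < k generalizing j k
  · exact this (j := k) (k := j) hjk.symm hk hj (Ne.symm hne) (by omega)
  have hshift : ((k - j : ℕ) : Fin M) ≠ 0 := by
    rw [Ne, Fin.natCast_eq_zero]
    exact Nat.not_dvd_of_pos_of_lt (by omega) (by omega)
  have hconst : n = fun _ => n 0 := funext <|
    (periodic_of_modeShift_iterate_eq hlt.le hjk).apply_eq_apply_zero_of_prime_card
      (by rwa [Nat.card_fin]) hshift
  apply hN
  rw [hconst, totalPhotons_const]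
  exact dvd_mul_right M _
end

section
/- If gcd(N, M) = 1, then the number of Fock occupation vectors n : Fin M → ℕ with total photon number N and clock label μ(n) ≡ m (mod M) is the same for every residue m; consequently each such count equals C(N+M−1, N) / M. -/
open Finset

/-- The number of occupation vectors `n : Fin M → ℕ` with total photon number `N` and
clock label `μ(n) ≡ m (mod M)`; since each occupation number is at most `N`, the vectors
are encoded as functions `Fin M → Fin (N+1)`. -/
def clockCount (M N : ℕ) (m : Fin M) : ℕ :=
  Fintype.card {n : Fin M → Fin (N + 1) //
    (∑ i : Fin M, (n i : ℕ)) = N ∧ (∑ i : Fin M, (i : ℕ) * (n i : ℕ)) % M = (m : ℕ)}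

/-- ZMod-valued clock count. -/
noncomputable def clockCountZ (M N : ℕ) [NeZero M] (z : ZMod M) : ℕ :=
  Fintype.card {n : Fin M → Fin (N + 1) //
    (∑ i : Fin M, (n i : ℕ)) = N ∧
      (∑ i : Fin M, ((i : ℕ) : ZMod M) * ((n i : ℕ) : ZMod M)) = z}

lemma clockCount_eq_Z (M N : ℕ) [NeZero M] (m : Fin M) :
    clockCount M N m = clockCountZ M N ((m : ℕ) : ZMod M) := by
  apply Fintype.card_congr
  apply Equiv.subtypeEquivRight
  intro n
  constructor <;> rintro ⟨h1, h2⟩ <;> refine ⟨h1, ?_⟩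
  · rw [← h2, ZMod.natCast_mod]
    push_cast
    rfl

  · have : (∑ i : Fin M, (i : ℕ) * (n i : ℕ) : ℕ) ≡ (m : ℕ) [MOD M] := by
      rw [← ZMod.natCast_eq_natCast_iff]
      push_cast at h2 ⊢
      exact h2
    rwa [Nat.ModEq, Nat.mod_eq_of_lt m.isLt] at this

lemma val_add_one_cast (M : ℕ) [NeZero M] (j : Fin M) :
    (((j + 1 : Fin M) : ℕ) : ZMod M) = ((j : ℕ) : ZMod M) + 1 := by
  rw [Fin.val_add, ZMod.natCast_mod]
  push_cast
  congr 1
  rw [Fin.val_one', ZMod.natCast_mod]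
  exact Nat.cast_one

lemma clockCountZ_shift (M N : ℕ) [NeZero M] (z : ZMod M) :
    clockCountZ M N z = clockCountZ M N (z + (N : ZMod M)) := by
  apply Fintype.card_congr
  refine Equiv.subtypeEquiv
    ((Equiv.subRight (1 : Fin M)).symm.arrowCongr (Equiv.refl (Fin (N + 1)))) ?_
  intro n
  have key1 : (∑ i : Fin M, ((n (i - 1) : ℕ))) = ∑ i : Fin M, (n i : ℕ) :=
    Fintype.sum_equiv (Equiv.subRight (1 : Fin M)) _ _ (fun i => rfl)
  have key2 : (∑ i : Fin M, ((i : ℕ) : ZMod M) * ((n (i - 1) : ℕ) : ZMod M))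
      = ∑ j : Fin M, (((j : ℕ) : ZMod M) + 1) * ((n j : ℕ) : ZMod M) := by
    rw [← Equiv.sum_comp (Equiv.subRight (1 : Fin M)).symm
      (fun i => ((i : ℕ) : ZMod M) * ((n (i - 1) : ℕ) : ZMod M))]
    refine Finset.sum_congr rfl fun j _ => ?_
    rw [Equiv.subRight_symm_apply, val_add_one_cast, add_sub_cancel_right]
  constructor
  · rintro ⟨h1, h2⟩
    refine ⟨?_, ?_⟩
    · simpa [Equiv.arrowCongr, Equiv.subRight] using key1.trans h1
    · show (∑ i : Fin M, ((i : ℕ) : ZMod M) * ((n (i - 1) : ℕ) : ZMod M)) = _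
      rw [key2]
      simp only [add_mul, one_mul, Finset.sum_add_distrib, h2]
      congr 1
      rw [← Nat.cast_sum, h1]
  · rintro ⟨h1, h2⟩
    have h1' : (∑ i : Fin M, (n i : ℕ)) = N := by
      rw [← key1]; exact h1
    refine ⟨h1', ?_⟩
    replace h2 : (∑ i : Fin M, ((i : ℕ) : ZMod M) * ((n (i - 1) : ℕ) : ZMod M))
        = z + (N : ZMod M) := h2
    rw [key2] at h2
    simp only [add_mul, one_mul, Finset.sum_add_distrib] at h2
    have hN : (∑ j : Fin M, ((n j : ℕ) : ZMod M)) = (N : ZMod M) := by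
      rw [← Nat.cast_sum, h1']
    rw [hN] at h2
    exact add_right_cancel h2

lemma clockCountZ_shift_many (M N : ℕ) [NeZero M] (z : ZMod M) (k : ℕ) :
    clockCountZ M N z = clockCountZ M N (z + (k : ZMod M) * (N : ZMod M)) := by
  induction k with
  | zero => simp
  | succ k ih =>
      rw [ih, clockCountZ_shift]
      congr 1
      push_cast
      ring

lemma clockCountZ_const (M N : ℕ) [NeZero M] (h : Nat.gcd N M = 1)
    (z₁ z₂ : ZMod M) : clockCountZ M N z₁ = clockCountZ M N z₂ := by
  set u := ZMod.unitOfCoprime N h with hu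
  have hval : ((ZMod.unitOfCoprime N h : ZMod M)) = (N : ZMod M) :=
    ZMod.coe_unitOfCoprime N h
  set k : ℕ := ((z₂ - z₁) * (↑u⁻¹ : ZMod M)).val with hk
  have hcast : (k : ZMod M) = (z₂ - z₁) * (↑u⁻¹ : ZMod M) := ZMod.natCast_rightInverse _
  have := clockCountZ_shift_many M N z₁ k
  rw [this]
  congr 1
  rw [hcast, ← hval, mul_assoc, Units.inv_mul]
  ring

lemma total_count (M N : ℕ) [NeZero M] :
    Fintype.card {n : Fin M → Fin (N + 1) // (∑ i : Fin M, (n i : ℕ)) = N}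
      = Nat.choose (N + M - 1) N := by
  have e1 : {n : Fin M → Fin (N + 1) // (∑ i : Fin M, (n i : ℕ)) = N}
      ≃ {P : Fin M → ℕ // ∑ i, P i = N} :=
    { toFun := fun n => ⟨fun i => (n.1 i : ℕ), n.2⟩
      invFun := fun P => ⟨fun i => ⟨P.1 i, by
        have h1 : P.1 i ≤ ∑ j, P.1 j := Finset.single_le_sum (f := P.1)
          (fun j _ => Nat.zero_le _) (Finset.mem_univ i)
        have h2 := P.2
        omega⟩, P.2⟩
      left_inv := fun n => by ext i; rfl
      right_inv := fun P => by ext i; rfl }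
  rw [Fintype.card_congr (e1.trans (Sym.equivNatSumOfFintype (Fin M) N).symm),
    Sym.card_sym_eq_choose, Fintype.card_fin, Nat.add_comm M N]

lemma sum_clockCount (M N : ℕ) [NeZero M] :
    ∑ m : Fin M, clockCount M N m
      = Fintype.card {n : Fin M → Fin (N + 1) // (∑ i : Fin M, (n i : ℕ)) = N} := by
  classical
  set T := {n : Fin M → Fin (N + 1) // (∑ i : Fin M, (n i : ℕ)) = N}
  set f : T → Fin M := fun n => ⟨(∑ i : Fin M, (i : ℕ) * (n.1 i : ℕ)) % M,
    Nat.mod_lt _ (NeZero.pos M)⟩ with hf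
  have hcard : Fintype.card T = ∑ m : Fin M, Fintype.card {t : T // f t = m} := by
    rw [Fintype.card_congr (Equiv.sigmaFiberEquiv f).symm, Fintype.card_sigma]
  rw [hcard]
  refine Finset.sum_congr rfl fun m _ => ?_
  apply Fintype.card_congr
  have e2 : {t : T // f t = m}
      ≃ {t : T // (∑ i : Fin M, (i : ℕ) * (t.1 i : ℕ)) % M = (m : ℕ)} :=
    Equiv.subtypeEquivRight (fun t => by
      constructor
      · intro h; exact congrArg Fin.val h
      · intro h; exact Fin.ext h)
  exact (e2.trans (Equiv.subtypeSubtypeEquivSubtypeInter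
    (fun n : Fin M → Fin (N + 1) => (∑ i : Fin M, (n i : ℕ)) = N)
    (fun n => (∑ i : Fin M, (i : ℕ) * (n i : ℕ)) % M = (m : ℕ)))).symm

/-- if `gcd(N, M) = 1`, then the number of `N`-photon occupation vectors with
clock label `m` is the same for every residue `m`, and equals `C(N+M−1, N) / M`. -/
theorem clockCount_uniform (M N : ℕ) [NeZero M] (h : Nat.gcd N M = 1) :
    (∀ m₁ m₂ : Fin M, clockCount M N m₁ = clockCount M N m₂) ∧
    (∀ m : Fin M, clockCount M N m = Nat.choose (N + M - 1) N / M) := by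
  have hconst : ∀ m₁ m₂ : Fin M, clockCount M N m₁ = clockCount M N m₂ := by
    intro m₁ m₂
    rw [clockCount_eq_Z, clockCount_eq_Z]
    exact clockCountZ_const M N h _ _
  refine ⟨hconst, fun m => ?_⟩
  have hsum : ∑ m' : Fin M, clockCount M N m' = Nat.choose (N + M - 1) N := by
    rw [sum_clockCount, total_count]
  have hsum' : ∑ m' : Fin M, clockCount M N m' = M * clockCount M N m := by
    rw [Finset.sum_congr rfl (fun m' _ => hconst m' m)]
    simp [Finset.sum_const, mul_comm]
  rw [← hsum, hsum', Nat.mul_div_cancel_left _ (NeZero.pos M)]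
end

section
/- Let n have shift orbit of cardinality d. The d eigenvectors |E_{n,m}(Λ_j)⟩, for m ranging over the multiples 0, M/d, …, (d−1)M/d of M/d, together with the Fock basis {X^k|n⟩ : 0 ≤ k < d} of the Pauli subspace span(E_n), form a pair of mutually unbiased bases: |⟨X^k n | E_{n,m}(Λ_j)⟩| = 1/√d for all k and m. -/
open Finset

noncomputable section

/-- `ω = exp(2πi/M)`. -/
def omegaM (M : ℕ) : ℂ := Complex.exp (2 * Real.pi * Complex.I / M)

/-- The Fock space over `M` modes: amplitudes on occupation vectors. -/
abbrev Fock (M : ℕ) := (Fin M → ℕ) → ℂ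

/-- Mode-shift operator: `X |n⟩ = |X·n⟩` with `(X·n)(m) = n(m−1)` mod `M`. -/
def fockX {M : ℕ} [NeZero M] (f : Fock M) : Fock M := fun v => f (fun m => v (m + 1))

/-- Phase-shift operator: `Z |n⟩ = ω^{μ(n)} |n⟩`. -/
def fockZ {M : ℕ} (f : Fock M) : Fock M := fun v => omegaM M ^ clockLabel v * f v

/-- Fock basis state `|n⟩`. -/
def fockDelta {M : ℕ} (n : Fin M → ℕ) : Fock M := fun v => if v = n then 1 else 0

/-- `ω^{1/2} = exp(πi/M)`. -/
def omegaHalf (M : ℕ) : ℂ := Complex.exp (Real.pi * Complex.I / M)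

/-- Generalized Pauli operator `Λ_j = X Z^j`. -/
def fockLambda {M : ℕ} [NeZero M] (j : ℤ) (f : Fock M) : Fock M :=
  fockX (fun v => omegaM M ^ (j * (clockLabel v : ℤ)) * f v)

/-- The `Λ_j` eigenvector `|E_{n,m}(Λ_j)⟩ = (1/√d) Σ_{k<d} ω^{−(½(M−1)j|n|+m)k} Λ_j^k |n⟩`
on the Pauli subspace of `n` (with `ω^{1/2} = exp(πi/M)`). -/
def pauliEigvec {M : ℕ} [NeZero M] (j : ℤ) (n : Fin M → ℕ) (d m : ℕ) : Fock M :=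
  fun v => (1 / Real.sqrt d : ℂ) *
    ∑ k ∈ Finset.range d,
      omegaHalf M ^ (-((((M : ℤ) - 1) * j * (totalPhotons n : ℤ) + 2 * (m : ℤ)) * k)) *
        ((fockLambda j)^[k] (fockDelta n)) v

/-! `Λ_j` sends `|w⟩` to a unimodular multiple of `|X·w⟩`, so `Λ_j^k |n⟩` is a unimodular
multiple of `|X^k n⟩`. The states `X^k n`, `k < d`, are pairwise distinct because `X` is
injective and no shorter power fixes `n`; hence the `X^k n`-coordinate of `|E_{n,m}(Λ_j)⟩` is
a single unimodular term scaled by `1/√d`. -/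

theorem Function.Injective.injOn_iterate_Iio {α : Type*} {f : α → α} (hf : Function.Injective f)
    {x : α} {d : ℕ} (hx : ∀ k, 0 < k → k < d → f^[k] x ≠ x) :
    (Set.Iio d).InjOn (f^[·] x) := by
  have key : ∀ a b, b < d → a < b → f^[a] x ≠ f^[b] x := fun a b hb hab h => by
    refine hx (b - a) (by omega) (by omega) ((hf.iterate a) ?_).symm
    rw [h, ← Function.iterate_add_apply, Nat.add_sub_cancel' hab.le]
  intro a ha b hb h
  rcases lt_trichotomy a b with hab | rfl | hab
  · exact absurd h (key a b hb hab)
  · rfl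
  · exact absurd h.symm (key b a ha hab)

lemma norm_omegaM (M : ℕ) : ‖omegaM M‖ = 1 := by
  rw [omegaM, mul_div_right_comm, ← Complex.ofReal_natCast, ← Complex.ofReal_ofNat,
    ← Complex.ofReal_mul, ← Complex.ofReal_div, Complex.norm_exp_ofReal_mul_I]

lemma norm_omegaHalf (M : ℕ) : ‖omegaHalf M‖ = 1 := by
  rw [omegaHalf, mul_div_right_comm, ← Complex.ofReal_natCast, ← Complex.ofReal_div,
    Complex.norm_exp_ofReal_mul_I]

section Orbit

variable {M : ℕ} [NeZero M]

lemma modeShift_injective : Function.Injective (modeShift (M := M)) := fun a b h =>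
  funext fun m => by simpa [modeShift] using congrFun h (m + 1)

lemma fockX_fockDelta (w : Fin M → ℕ) : fockX (fockDelta w) = fockDelta (modeShift w) := by
  funext v
  have : (fun m => v (m + 1)) = w ↔ v = modeShift w := by
    constructor <;> rintro rfl <;> funext m <;> simp [modeShift]
  simp only [fockX, fockDelta, this]

lemma fockLambda_smul_fockDelta (j : ℤ) (c : ℂ) (w : Fin M → ℕ) :
    fockLambda j (c • fockDelta w) =
      (omegaM M ^ (j * (clockLabel w : ℤ)) * c) • fockDelta (modeShift w) := by
  have : (fun v => omegaM M ^ (j * (clockLabel v : ℤ)) * (c • fockDelta w) v) =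
      (omegaM M ^ (j * (clockLabel w : ℤ)) * c) • fockDelta w := by
    funext v
    by_cases hv : v = w <;> simp [fockDelta, hv]
  rw [fockLambda, this, ← fockX_fockDelta]
  rfl

def lambdaPhase (j : ℤ) (n : Fin M → ℕ) (k : ℕ) : ℂ :=
  ∏ i ∈ range k, omegaM M ^ (j * (clockLabel (modeShift^[i] n) : ℤ))

lemma norm_lambdaPhase (j : ℤ) (n : Fin M → ℕ) (k : ℕ) : ‖lambdaPhase j n k‖ = 1 := by
  simp [lambdaPhase, norm_prod, norm_zpow, norm_omegaM]

lemma fockLambda_iterate_fockDelta (j : ℤ) (n : Fin M → ℕ) (k : ℕ) :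
    (fockLambda j)^[k] (fockDelta n) = lambdaPhase j n k • fockDelta (modeShift^[k] n) := by
  induction k with
  | zero => simp [lambdaPhase]
  | succ k ih =>
    rw [Function.iterate_succ_apply', ih, fockLambda_smul_fockDelta, lambdaPhase, lambdaPhase,
      prod_range_succ, Function.iterate_succ_apply', mul_comm]

lemma pauliEigvec_apply_iterate (j : ℤ) (n : Fin M → ℕ) {d : ℕ}
    (hmin : ∀ k, 0 < k → k < d → modeShift^[k] n ≠ n) (m : ℕ) {k : ℕ} (hk : k < d) :
    pauliEigvec j n d m (modeShift^[k] n) = (1 / Real.sqrt d : ℂ) *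
      (omegaHalf M ^ (-((((M : ℤ) - 1) * j * (totalPhotons n : ℤ) + 2 * (m : ℤ)) * k)) *
        lambdaPhase j n k) := by
  have hinj := modeShift_injective.injOn_iterate_Iio hmin
  rw [pauliEigvec, sum_eq_single_of_mem k (mem_range.mpr hk)]
  · simp [fockLambda_iterate_fockDelta, fockDelta]
  · intro i hi hik
    have : modeShift^[k] n ≠ modeShift^[i] n := fun h =>
      hik (hinj (Set.mem_Iio.mpr (mem_range.mp hi)) (Set.mem_Iio.mpr hk) h.symm)
    simp [fockLambda_iterate_fockDelta, fockDelta, this]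

end Orbit

theorem pauli_eigenbasis_mub_general (M : ℕ) [NeZero M] (j : ℤ) (n : Fin M → ℕ) (d : ℕ)
    (hmin : ∀ k, 0 < k → k < d → modeShift^[k] n ≠ n) :
    ∀ k < d, ∀ m : ℕ, (M / d) ∣ m →
      ‖pauliEigvec j n d m (modeShift^[k] n)‖ = 1 / Real.sqrt d := by
  intro k hk m _
  rw [pauliEigvec_apply_iterate j n hmin m hk, norm_mul, norm_mul, norm_zpow, norm_omegaHalf,
    one_zpow, norm_lambdaPhase, one_mul, mul_one, norm_div, norm_one, Complex.norm_real,
    Real.norm_of_nonneg (Real.sqrt_nonneg _)]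

/-- the `Λ_j` eigenbasis `{|E_{n,m}(Λ_j)⟩}` (for `m` a multiple of `M/d`) and
the Fock basis `{X^k|n⟩ : k < d}` of the Pauli subspace `span(E_n)` are mutually unbiased:
`|⟨X^k n | E_{n,m}(Λ_j)⟩| = 1/√d` for all `k` and `m`. -/
theorem pauli_eigenbasis_mub (M : ℕ) [NeZero M] (j : ℤ) (n : Fin M → ℕ) (d : ℕ)
    (hd : 0 < d) (hfix : modeShift^[d] n = n)
    (hmin : ∀ k, 0 < k → k < d → modeShift^[k] n ≠ n) (hdM : d ∣ M) :
    ∀ k < d, ∀ m : ℕ, (M / d) ∣ m →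
      ‖pauliEigvec j n d m (modeShift^[k] n)‖ = 1 / Real.sqrt d :=
  pauli_eigenbasis_mub_general M j n d hmin
end
end

section
/- The single-photon inverse generalized Hadamard matrix H_j^† = F V^j intertwines the single-photon Pauli matrices: H_j^† · Λ_j = ω^{(M−1)j/2} · Z · H_j^†, where Λ_j, Z are the M×M single-photon matrices of X Z^j and Z. -/
open Matrix

noncomputable section

/-- Discrete Fourier transform matrix `F_{m'm} = ω^{m'm}/√M`. -/
def fourierMat (M : ℕ) : Matrix (Fin M) (Fin M) ℂ :=
  fun m' m => omegaM M ^ ((m' : ℕ) * (m : ℕ)) / Real.sqrt M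

/-- Clock matrix `Z = diag(ω^m)`. -/
def clockMat (M : ℕ) : Matrix (Fin M) (Fin M) ℂ :=
  Matrix.diagonal fun m : Fin M => omegaM M ^ (m : ℕ)

/-- Cyclic shift matrix `X_{m'm} = δ_{m', m+1 mod M}`. -/
def shiftMat (M : ℕ) [NeZero M] : Matrix (Fin M) (Fin M) ℂ :=
  fun m' m => if m' = m + 1 then 1 else 0

/-- Single-photon generalized Pauli matrix `Λ_j = X Z^j` with
`(Z^j) = diag(ω^{jm})` for `j ∈ ℤ`. -/
def pauliMat (M : ℕ) [NeZero M] (j : ℤ) : Matrix (Fin M) (Fin M) ℂ :=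
  shiftMat M * Matrix.diagonal fun m : Fin M => omegaM M ^ (j * (m : ℤ))

/-- Diagonal phase matrix `V = diag(ω^{(M−m)m/2})`. -/
def phaseV (M : ℕ) : Matrix (Fin M) (Fin M) ℂ :=
  Matrix.diagonal fun m : Fin M => omegaHalf M ^ ((M - (m : ℕ)) * (m : ℕ))

/-- Inverse generalized Hadamard matrix `H_j^† = F V^j`. -/
def hadamardDag (M : ℕ) (j : ℤ) : Matrix (Fin M) (Fin M) ℂ :=
  fourierMat M * Matrix.diagonal fun m : Fin M =>
    (omegaHalf M ^ ((M - (m : ℕ)) * (m : ℕ))) ^ j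

lemma hne (M : ℕ) : omegaHalf M ≠ 0 := Complex.exp_ne_zero _

lemma h2M (M : ℕ) [NeZero M] : omegaHalf M ^ ((2 * M : ℕ) : ℤ) = 1 := by
  have hM : (M : ℂ) ≠ 0 := Nat.cast_ne_zero.mpr (NeZero.ne M)
  rw [omegaHalf, zpow_natCast, ← Complex.exp_nat_mul]
  rw [show ((2*M : ℕ) : ℂ) * (Real.pi * Complex.I / M) = 2 * Real.pi * Complex.I by
    push_cast; field_simp]
  exact Complex.exp_two_pi_mul_I

lemma hcong (M : ℕ) [NeZero M] {a b : ℤ} (h : ((2*M : ℕ) : ℤ) ∣ (a - b)) :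
    omegaHalf M ^ a = omegaHalf M ^ b := by
  obtain ⟨k, hk⟩ := h
  have : a = b + ((2*M : ℕ) : ℤ) * k := by linarith
  rw [this, zpow_add₀ (hne M), _root_.zpow_mul, h2M, _root_.one_zpow, mul_one]

lemma omegaM_eq (M : ℕ) : omegaM M = omegaHalf M ^ (2 : ℤ) := by
  rw [omegaM, omegaHalf, show (2:ℤ) = ((2:ℕ):ℤ) from rfl, zpow_natCast, ← Complex.exp_nat_mul]
  ring_nf

lemma hd_apply (M : ℕ) (j : ℤ) (a b : Fin M) :
    hadamardDag M j a b
      = omegaM M ^ ((a : ℕ) * (b : ℕ)) / Real.sqrt M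
          * (omegaHalf M ^ ((M - (b : ℕ)) * (b : ℕ))) ^ j := by
  simp [hadamardDag, fourierMat, Matrix.mul_diagonal]

lemma pauli_apply (M : ℕ) [NeZero M] (j : ℤ) (a b : Fin M) :
    pauliMat M j a b
      = (if a = b + 1 then 1 else 0) * omegaM M ^ (j * (b : ℤ)) := by
  simp [pauliMat, shiftMat, Matrix.mul_diagonal]

/-- `H_j^† Λ_j = ω^{(M−1)j/2} Z H_j^†`. -/
theorem hadamard_intertwines (M : ℕ) [NeZero M] (j : ℤ) :
    hadamardDag M j * pauliMat M j
      = (omegaHalf M ^ (((M : ℤ) - 1) * j)) • (clockMat M * hadamardDag M j) := by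
  ext m' m
  rw [Matrix.mul_apply, Matrix.smul_apply, show clockMat M * hadamardDag M j = fun a b : Fin M =>
      omegaM M ^ (a : ℕ) * hadamardDag M j a b from by
    ext a b; rw [clockMat, Matrix.diagonal_mul]]
  simp only [hd_apply, pauli_apply, ite_mul, mul_ite, zero_mul, mul_zero, one_mul,
    smul_eq_mul]
  rw [Finset.sum_ite_eq' Finset.univ (m+1)]
  simp only [Finset.mem_univ, if_true]
  have hs : ∀ n : ℕ, omegaM M ^ n = omegaHalf M ^ (2 * (n : ℤ)) := by
    intro n
    rw [omegaM_eq, ← zpow_natCast (omegaHalf M ^ (2:ℤ)) n, ← _root_.zpow_mul]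
  have hz : omegaM M ^ (j * ((m : ℕ) : ℤ)) = omegaHalf M ^ (2 * (j * ((m : ℕ) : ℤ))) := by
    rw [omegaM_eq, ← _root_.zpow_mul]
  have hp : ∀ n : ℕ, (omegaHalf M ^ n) ^ j = omegaHalf M ^ ((n : ℤ) * j) := by
    intro n
    rw [← zpow_natCast (omegaHalf M) n, ← _root_.zpow_mul]
  rw [hs, hs, hs, hz, hp, hp]
  have hsqrt : ((Real.sqrt M : ℝ) : ℂ) ≠ 0 := by
    have : (0:ℝ) < Real.sqrt M := Real.sqrt_pos.mpr
      (by exact_mod_cast Nat.pos_of_ne_zero (NeZero.ne M))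
    exact_mod_cast ne_of_gt this
  have key : omegaHalf M ^ (2 * (((m' : ℕ) * ((m+1 : Fin M) : ℕ) : ℕ) : ℤ)
        + (((M - ((m+1 : Fin M) : ℕ)) * ((m+1 : Fin M) : ℕ) : ℕ) : ℤ) * j
        + 2 * (j * ((m : ℕ) : ℤ)))
      = omegaHalf M ^ ((((M : ℕ) : ℤ) - 1) * j + 2 * ((m' : ℕ) : ℤ)
        + 2 * (((m' : ℕ) * (m : ℕ) : ℕ) : ℤ)
        + (((M - (m : ℕ)) * (m : ℕ) : ℕ) : ℤ) * j) := by
    apply hcong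
    have hmlt : (m : ℕ) < M := m.isLt
    have hμ : ((m+1 : Fin M) : ℕ) = ((m : ℕ) + 1) % M := by
      simp [Fin.add_def]
    rcases lt_or_ge ((m : ℕ) + 1) M with hlt | hge
    · have h1 : ((m+1 : Fin M) : ℕ) = (m : ℕ) + 1 := by
        rw [hμ, Nat.mod_eq_of_lt hlt]
      refine ⟨0, ?_⟩
      rw [h1]
      push_cast [Nat.cast_sub (le_of_lt hlt), Nat.cast_sub (le_of_lt hmlt)]
      ring
    · have heq : (m : ℕ) + 1 = M := le_antisymm hmlt hge
      have h1 : ((m+1 : Fin M) : ℕ) = 0 := by rw [hμ, heq, Nat.mod_self]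
      refine ⟨-(((m' : ℕ) : ℤ) ), ?_⟩
      have hm : ((m : ℕ) : ℤ) = (M : ℤ) - 1 := by omega
      rw [h1]
      push_cast [Nat.cast_sub hmlt.le]
      rw [hm]
      ring
  rw [div_eq_mul_inv, div_eq_mul_inv]
  rw [zpow_add₀ (hne M), zpow_add₀ (hne M)] at key
  rw [zpow_add₀ (hne M), zpow_add₀ (hne M), zpow_add₀ (hne M)] at key
  linear_combination ((Real.sqrt M : ℝ) : ℂ)⁻¹ * key
end
end

section
/- Maassen–Uffink uncertainty relation: let A = {|a_k⟩} and B = {|b_l⟩} be two orthonormal bases of a d-dimensional Hilbert space that are mutually unbiased (|⟨a_k|b_l⟩| = 1/√d for all k, l). Then for every unit vector |ψ⟩, the sum of the Shannon entropies of the outcome distributions satisfies H(p_A) + H(p_B) ≥ log d, where p_A(k) = |⟨a_k|ψ⟩|² and p_B(l) = |⟨b_l|ψ⟩|². -/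
/-!
For a unit vector `ψ` with distributions `s` in the basis `a` and `p` in the basis `b`, and any
positive weights `w`, Cauchy–Schwarz together with `|⟨a k, b l⟩|² = 1/d` gives the Loewner
inequality `∑ₖ sₖ |aₖ⟩⟨aₖ| ≤ ∑ₗ (∑ w) / (d wₗ) |bₗ⟩⟨bₗ|`. The square root is operator monotone,
so the inequality survives raising every eigenvalue to the power `2⁻¹ ^ n`; evaluating at `ψ`
and comparing derivatives at exponent `0` yields `∑ s log s ≤ ∑ₗ pₗ log ((∑ w) / (d wₗ))`.
Taking `w = p + ε` and letting `ε → 0` gives `∑ s log s + log d ≤ -∑ p log p`.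
-/

open InnerProductSpace Filter Topology

lemma HasDerivAt.le_of_frequently_le {F G : ℝ → ℝ} {F' G' x : ℝ} (hF : HasDerivAt F F' x)
    (hG : HasDerivAt G G' x) (hx : F x = G x) (hle : ∃ᶠ t in 𝓝[>] 0, F (x + t) ≤ G (x + t)) :
    F' ≤ G' :=
  le_of_tendsto_of_tendsto_of_frequently hF.tendsto_slope_zero_right hG.tendsto_slope_zero_right <|
    (hle.and_eventually self_mem_nhdsWithin).mono fun t ⟨hFG, ht⟩ => by
      rw [hx]
      exact smul_le_smul_of_nonneg_left (sub_le_sub_right hFG _) (inv_nonneg.mpr (le_of_lt ht))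

lemma hasDerivAt_mul_rpow_zero {a s : ℝ} (hs : 0 ≤ s) (hzero : s = 0 → a = 0) :
    HasDerivAt (fun x : ℝ => a * s ^ x) (a * Real.log s) 0 := by
  rcases hs.eq_or_lt with rfl | hs
  · simpa [hzero rfl] using hasDerivAt_const (0 : ℝ) (0 : ℝ)
  · simpa using ((Real.hasStrictDerivAt_const_rpow hs 0).hasDerivAt.const_mul a)

lemma tendsto_mul_log_add_nhds_zero {p : ℝ} (hp : 0 ≤ p) :
    Tendsto (fun ε => p * Real.log (p + ε)) (𝓝 0) (𝓝 (p * Real.log p)) := by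
  rcases hp.eq_or_lt with rfl | hp
  · simp
  · have hlog : ContinuousAt (fun ε => Real.log (p + ε)) 0 :=
      (continuous_const.add continuous_id).continuousAt.log (by simpa using hp.ne')
    simpa using (hlog.const_mul p).tendsto

namespace OrthonormalBasis

variable {ι : Type*} [Fintype ι] {H : Type*} [NormedAddCommGroup H] [InnerProductSpace ℂ H]

noncomputable def diagonal (c : OrthonormalBasis ι ℂ H) (f : ι → ℝ) : H →L[ℂ] H :=
  ∑ k, (f k : ℂ) • rankOne ℂ (c k) (c k)

variable (c : OrthonormalBasis ι ℂ H)

lemma diagonal_apply (f : ι → ℝ) (v : H) :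
    c.diagonal f v = ∑ k, ((f k : ℂ) * ⟪c k, v⟫_ℂ) • c k := by
  simp only [diagonal, sum_apply, smul_apply, rankOne_apply, smul_smul]

lemma diagonal_apply_self (f : ι → ℝ) (j : ι) : c.diagonal f (c j) = (f j : ℂ) • c j := by
  classical
  simp [diagonal_apply, c.inner_eq_ite]

lemma diagonal_mul (f g : ι → ℝ) : c.diagonal f * c.diagonal g = c.diagonal (f * g) :=
  ContinuousLinearMap.coe_injective <| c.toBasis.ext fun j => by
    change c.diagonal f (c.diagonal g (c j)) = c.diagonal (f * g) (c j)
    rw [diagonal_apply_self, map_smul, diagonal_apply_self, diagonal_apply_self, smul_smul,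
      Pi.mul_apply, Complex.ofReal_mul, mul_comm]

lemma inner_diagonal_apply_self (f : ι → ℝ) (v : H) :
    ⟪c.diagonal f v, v⟫_ℂ = ((∑ k, f k * ‖⟪c k, v⟫_ℂ‖ ^ 2 : ℝ) : ℂ) := by
  rw [diagonal_apply, sum_inner]
  push_cast
  refine Finset.sum_congr rfl fun k _ => ?_
  rw [inner_smul_left, map_mul, Complex.conj_ofReal, mul_assoc, Complex.conj_mul']

variable {κ : Type*} [Fintype κ]

lemma diagonal_le_diagonal_iff (b : OrthonormalBasis κ ℂ H) (f : ι → ℝ) (g : κ → ℝ) :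
    c.diagonal f ≤ b.diagonal g ↔
      ∀ v, ∑ k, f k * ‖⟪c k, v⟫_ℂ‖ ^ 2 ≤ ∑ l, g l * ‖⟪b l, v⟫_ℂ‖ ^ 2 := by
  simp only [ContinuousLinearMap.le_def, ContinuousLinearMap.isPositive_iff_complex,
    sub_apply, inner_sub_left, inner_diagonal_apply_self, ← Complex.ofReal_sub,
    RCLike.re_to_complex, Complex.ofReal_re, true_and, sub_nonneg]

lemma diagonal_nonneg {f : ι → ℝ} (hf : 0 ≤ f) : 0 ≤ c.diagonal f := by
  have hzero : c.diagonal 0 = 0 := by simp [diagonal]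
  rw [← hzero, diagonal_le_diagonal_iff]
  intro v
  simpa using Finset.sum_nonneg fun k _ => mul_nonneg (hf k) (sq_nonneg ‖⟪c k, v⟫_ℂ‖)

lemma sqrt_diagonal [CompleteSpace H] {f : ι → ℝ} (hf : 0 ≤ f) :
    CFC.sqrt (c.diagonal f) = c.diagonal (fun k => √(f k)) :=
  CFC.sqrt_unique (by rw [diagonal_mul]; congr; ext k; exact Real.mul_self_sqrt (hf k))
    (c.diagonal_nonneg fun k => Real.sqrt_nonneg _)

lemma diagonal_rpow_le_diagonal_rpow [CompleteSpace H] (b : OrthonormalBasis κ ℂ H)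
    {f : ι → ℝ} {g : κ → ℝ} (hf : 0 ≤ f) (hg : 0 ≤ g) (h : c.diagonal f ≤ b.diagonal g)
    (n : ℕ) :
    c.diagonal (fun k => f k ^ (2⁻¹ ^ n : ℝ)) ≤ b.diagonal (fun l => g l ^ (2⁻¹ ^ n : ℝ)) := by
  induction n with
  | zero => simpa using h
  | succ n ih =>
    have sqrt_rpow : ∀ {x : ℝ}, 0 ≤ x → √(x ^ (2⁻¹ ^ n : ℝ)) = x ^ (2⁻¹ ^ (n + 1) : ℝ) :=
      fun hx => by rw [Real.sqrt_eq_rpow, ← Real.rpow_mul hx, pow_succ, one_div]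
    have := CFC.sqrt_le_sqrt _ _ ih
    rwa [sqrt_diagonal _ fun k => Real.rpow_nonneg (hf k) _,
      sqrt_diagonal _ fun l => Real.rpow_nonneg (hg l) _, funext fun k => sqrt_rpow (hf k),
      funext fun l => sqrt_rpow (hg l)] at this

theorem sum_mul_log_le_of_diagonal_le [CompleteSpace H] (b : OrthonormalBasis κ ℂ H) (ψ : H)
    {t : κ → ℝ} (ht : ∀ l, 0 < t l) (h : c.diagonal (fun k => ‖⟪c k, ψ⟫_ℂ‖ ^ 2) ≤ b.diagonal t) :
    ∑ k, ‖⟪c k, ψ⟫_ℂ‖ ^ 2 * Real.log (‖⟪c k, ψ⟫_ℂ‖ ^ 2) ≤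
      ∑ l, ‖⟪b l, ψ⟫_ℂ‖ ^ 2 * Real.log (t l) := by
  set s := fun k => ‖⟪c k, ψ⟫_ℂ‖ ^ 2
  set p := fun l => ‖⟪b l, ψ⟫_ℂ‖ ^ 2
  have hs : 0 ≤ s := fun k => sq_nonneg _
  have hF : HasDerivAt (fun x : ℝ => ∑ k, s k * s k ^ x) (∑ k, s k * Real.log (s k)) 0 :=
    HasDerivAt.fun_sum fun k _ => hasDerivAt_mul_rpow_zero (hs k) id
  have hG : HasDerivAt (fun x : ℝ => ∑ l, p l * t l ^ x) (∑ l, p l * Real.log (t l)) 0 :=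
    HasDerivAt.fun_sum fun l _ => hasDerivAt_mul_rpow_zero (ht l).le fun h0 => ((ht l).ne' h0).elim
  refine hF.le_of_frequently_le hG (by simp [s, p, sum_sq_norm_inner_right]) ?_
  refine (tendsto_pow_atTop_nhdsWithin_zero_of_lt_one (r := (2⁻¹ : ℝ)) (by norm_num)
    (by norm_num)).frequently (Frequently.of_forall fun n => ?_)
  have := (c.diagonal_le_diagonal_iff b _ _).mp
    (c.diagonal_rpow_le_diagonal_rpow b hs (fun l => (ht l).le) h n) ψ
  simpa only [zero_add, mul_comm (s _), mul_comm (p _)] using this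

lemma norm_inner_sq_le_mul_sum_div (b : OrthonormalBasis κ ℂ H) (x v : H) {w : κ → ℝ}
    (hw : ∀ l, 0 < w l) :
    ‖⟪x, v⟫_ℂ‖ ^ 2 ≤ (∑ l, w l * ‖⟪x, b l⟫_ℂ‖ ^ 2) * ∑ l, ‖⟪b l, v⟫_ℂ‖ ^ 2 / w l := by
  have hexpand : ‖⟪x, v⟫_ℂ‖ ≤ ∑ l, ‖⟪x, b l⟫_ℂ‖ * ‖⟪b l, v⟫_ℂ‖ := by
    rw [← b.sum_inner_mul_inner]
    exact (norm_sum_le _ _).trans_eq (by simp only [norm_mul])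
  refine (pow_le_pow_left₀ (norm_nonneg _) hexpand 2).trans ?_
  refine Finset.sum_sq_le_sum_mul_sum_of_sq_le_mul _
    (fun l _ => mul_nonneg (hw l).le (sq_nonneg _)) (fun l _ => div_nonneg (sq_nonneg _) (hw l).le)
    fun l _ => le_of_eq ?_
  field_simp [(hw l).ne']

variable {d : ℕ}

def IsMutuallyUnbiased (a b : OrthonormalBasis (Fin d) ℂ H) : Prop :=
  ∀ k l, ‖⟪a k, b l⟫_ℂ‖ = 1 / √d

lemma IsMutuallyUnbiased.diagonal_le {a b : OrthonormalBasis (Fin d) ℂ H}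
    (hab : IsMutuallyUnbiased a b) {ψ : H} (hψ : ‖ψ‖ = 1) {w : Fin d → ℝ} (hw : ∀ l, 0 < w l) :
    a.diagonal (fun k => ‖⟪a k, ψ⟫_ℂ‖ ^ 2) ≤ b.diagonal (fun l => (∑ j, w j) / (d * w l)) := by
  rw [diagonal_le_diagonal_iff]
  intro v
  set C := (∑ j, w j) / d * ∑ l, ‖⟪b l, v⟫_ℂ‖ ^ 2 / w l
  have hk : ∀ k, ‖⟪a k, v⟫_ℂ‖ ^ 2 ≤ C := fun k => by
    have hweights : ∑ l, w l * ‖⟪a k, b l⟫_ℂ‖ ^ 2 = (∑ j, w j) / d := by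
      simp only [hab k, div_pow, one_pow, Real.sq_sqrt (Nat.cast_nonneg d), mul_one_div,
        Finset.sum_div]
    simpa only [hweights] using b.norm_inner_sq_le_mul_sum_div (a k) v hw
  calc ∑ k, ‖⟪a k, ψ⟫_ℂ‖ ^ 2 * ‖⟪a k, v⟫_ℂ‖ ^ 2
      ≤ ∑ k, ‖⟪a k, ψ⟫_ℂ‖ ^ 2 * C := by gcongr with k; exact hk k
    _ = C := by rw [← Finset.sum_mul, a.sum_sq_norm_inner_right, hψ, one_pow, one_mul]
    _ = ∑ l, (∑ j, w j) / (d * w l) * ‖⟪b l, v⟫_ℂ‖ ^ 2 := by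
      simp only [C, Finset.mul_sum]
      refine Finset.sum_congr rfl fun l _ => ?_
      ring

theorem IsMutuallyUnbiased.sum_mul_log_add_log_le [CompleteSpace H] (hd : 0 < d)
    {a b : OrthonormalBasis (Fin d) ℂ H} (hab : IsMutuallyUnbiased a b) {ψ : H} (hψ : ‖ψ‖ = 1)
    {ε : ℝ} (hε : 0 < ε) :
    ∑ k, ‖⟪a k, ψ⟫_ℂ‖ ^ 2 * Real.log (‖⟪a k, ψ⟫_ℂ‖ ^ 2) + Real.log d ≤
      Real.log (1 + d * ε) - ∑ l, ‖⟪b l, ψ⟫_ℂ‖ ^ 2 * Real.log (‖⟪b l, ψ⟫_ℂ‖ ^ 2 + ε) := by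
  have hp : ∑ l, ‖⟪b l, ψ⟫_ℂ‖ ^ 2 = 1 := by rw [b.sum_sq_norm_inner_right, hψ, one_pow]
  have hw : ∀ l, 0 < ‖⟪b l, ψ⟫_ℂ‖ ^ 2 + ε := fun l => by positivity
  have hd' : (0 : ℝ) < d := Nat.cast_pos.mpr hd
  have hlog : ∀ l, Real.log ((∑ j, (‖⟪b j, ψ⟫_ℂ‖ ^ 2 + ε)) / (d * (‖⟪b l, ψ⟫_ℂ‖ ^ 2 + ε))) =
      Real.log (1 + d * ε) - Real.log d - Real.log (‖⟪b l, ψ⟫_ℂ‖ ^ 2 + ε) := fun l => by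
    rw [Finset.sum_add_distrib, hp, Finset.sum_const, Finset.card_univ, Fintype.card_fin,
      nsmul_eq_mul, Real.log_div (by positivity) (by positivity),
      Real.log_mul hd'.ne' (hw l).ne']
    ring
  have hsum : 0 < ∑ j, (‖⟪b j, ψ⟫_ℂ‖ ^ 2 + ε) := by
    rw [Finset.sum_add_distrib, hp]
    positivity
  have key := a.sum_mul_log_le_of_diagonal_le b ψ
    (fun l => div_pos hsum (mul_pos hd' (hw l))) (hab.diagonal_le hψ hw)
  simp only [hlog, mul_sub, Finset.sum_sub_distrib, ← Finset.sum_mul, hp, one_mul] at key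
  linarith

end OrthonormalBasis

/-- Maassen–Uffink: if `A = {a_k}` and `B = {b_l}` are mutually unbiased
orthonormal bases of a `d`-dimensional Hilbert space (`|⟨a_k, b_l⟩| = 1/√d`), then for
every unit vector `ψ`, `H(p_A) + H(p_B) ≥ log d`, where `p_A(k) = |⟨a_k, ψ⟩|²` and
`p_B(l) = |⟨b_l, ψ⟩|²` and `H` is the Shannon entropy (natural logarithm, `0·log 0 = 0`). -/
theorem maassen_uffink
    (d : ℕ) (hd : 0 < d) {H : Type*} [NormedAddCommGroup H] [InnerProductSpace ℂ H]
    (a b : OrthonormalBasis (Fin d) ℂ H)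
    (hmub : ∀ k l, ‖⟪a k, b l⟫_ℂ‖ = 1 / Real.sqrt d)
    (ψ : H) (hψ : ‖ψ‖ = 1) :
    Real.log d ≤
      (- ∑ k, ‖⟪a k, ψ⟫_ℂ‖ ^ 2 * Real.log (‖⟪a k, ψ⟫_ℂ‖ ^ 2)) +
      (- ∑ l, ‖⟪b l, ψ⟫_ℂ‖ ^ 2 * Real.log (‖⟪b l, ψ⟫_ℂ‖ ^ 2)) := by
  have : FiniteDimensional ℂ H := Module.Finite.of_basis a.toBasis
  have : CompleteSpace H := FiniteDimensional.complete ℂ H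
  have hlim : Tendsto (fun ε => Real.log (1 + d * ε) -
        ∑ l, ‖⟪b l, ψ⟫_ℂ‖ ^ 2 * Real.log (‖⟪b l, ψ⟫_ℂ‖ ^ 2 + ε)) (𝓝[>] 0)
      (𝓝 (- ∑ l, ‖⟪b l, ψ⟫_ℂ‖ ^ 2 * Real.log (‖⟪b l, ψ⟫_ℂ‖ ^ 2))) := by
    have hlog : ContinuousAt (fun ε : ℝ => Real.log (1 + d * ε)) 0 :=
      (continuous_const.add (continuous_const.mul continuous_id)).continuousAt.log (by simp)
    simpa using (hlog.tendsto.sub (tendsto_finsetSum _ fun l _ =>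
      tendsto_mul_log_add_nhds_zero (sq_nonneg _))).mono_left nhdsWithin_le_nhds
  have := ge_of_tendsto hlim (eventually_nhdsWithin_of_forall fun _ hε =>
    OrthonormalBasis.IsMutuallyUnbiased.sum_mul_log_add_log_le hd hmub hψ hε)
  linarith
end
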